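/- arXiv:1511.04113 — 4 statements merged into one kernel-verified Lean document; each statement's English description precedes it below -/
import Mathlib

section
/- For any h with 1 ≤ h ≤ n−2, the h-embedded connectivity of the hypercube is exactly ζ_h(Q_n) = 2^h (n−h). -/
open SimpleGraph

def cubeGraph (n : ℕ) : SimpleGraph (Fin n → Bool) where
  Adj x y := ∃! i, x i ≠ y i
  symm := by
    constructor
    rintro x y ⟨i, hi, hu⟩
    exact ⟨i, hi.symm, fun j hj => hu j hj.symm⟩
  loopless := by constructor; rintro x ⟨i, hi, -⟩; exact hi rfl

def starGraph (n : ℕ) [NeZero n] : SimpleGraph (Equiv.Perm (Fin n)) where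
  Adj x y := ∃ i : Fin n, i ≠ 0 ∧ y = x * Equiv.swap 0 i
  symm := by
    constructor
    rintro x y ⟨i, hi, rfl⟩
    exact ⟨i, hi, by rw [mul_assoc, Equiv.swap_mul_self, mul_one]⟩
  loopless := by
    constructor
    rintro x ⟨i, hi, h⟩
    exact hi (Equiv.swap_eq_one_iff.mp (left_eq_mul.mp h)).symm

def bubbleGraph (n : ℕ) : SimpleGraph (Equiv.Perm (Fin n)) where
  Adj x y := ∃ (i : Fin n) (hi : (i : ℕ) + 1 < n), y = x * Equiv.swap i ⟨(i : ℕ) + 1, hi⟩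
  symm := by
    constructor
    rintro x y ⟨i, hi, rfl⟩
    exact ⟨i, hi, by rw [mul_assoc, Equiv.swap_mul_self, mul_one]⟩
  loopless := by
    constructor
    rintro x ⟨i, hi, h⟩
    have h1 := Equiv.swap_eq_one_iff.mp (left_eq_mul.mp h)
    have := congrArg Fin.val h1
    simp at this

def IsEmbVertexCut {V W : Type*} (G : SimpleGraph V) (H : SimpleGraph W) (S : Set V) : Prop :=
  ¬ (G.induce Sᶜ).Connected ∧
    ∀ v ∉ S, ∃ A : Set V, v ∈ A ∧ Disjoint A S ∧ Nonempty (H ≃g G.induce A)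

noncomputable def embConn {V W : Type*} (G : SimpleGraph V) (H : SimpleGraph W) : ℕ :=
  sInf {k | ∃ S : Set V, S.Finite ∧ S.ncard = k ∧ IsEmbVertexCut G H S}

def IsEmbEdgeCut {V W : Type*} (G : SimpleGraph V) (H : SimpleGraph W) (F : Set (Sym2 V)) : Prop :=
  F ⊆ G.edgeSet ∧ ¬ (G.deleteEdges F).Connected ∧
    ∀ v : V, ∃ A : Set V, v ∈ A ∧ Nonempty (H ≃g (G.deleteEdges F).induce A)

noncomputable def embEdgeConn {V W : Type*} (G : SimpleGraph V) (H : SimpleGraph W) : ℕ :=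
  sInf {k | ∃ F : Set (Sym2 V), F.Finite ∧ F.ncard = k ∧ IsEmbEdgeCut G H F}

def IsSuperVertexCut {V : Type*} (G : SimpleGraph V) (h : ℕ) (S : Set V) : Prop :=
  ¬ (G.induce Sᶜ).Connected ∧ ∀ v ∉ S, h ≤ ((G.neighborSet v) \ S).ncard

noncomputable def superConn {V : Type*} (G : SimpleGraph V) (h : ℕ) : ℕ :=
  sInf {k | ∃ S : Set V, S.Finite ∧ S.ncard = k ∧ IsSuperVertexCut G h S}

def IsSuperEdgeCut {V : Type*} (G : SimpleGraph V) (h : ℕ) (F : Set (Sym2 V)) : Prop :=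
  F ⊆ G.edgeSet ∧ ¬ (G.deleteEdges F).Connected ∧
    ∀ v : V, h ≤ ((G.deleteEdges F).neighborSet v).ncard

noncomputable def superEdgeConn {V : Type*} (G : SimpleGraph V) (h : ℕ) : ℕ :=
  sInf {k | ∃ F : Set (Sym2 V), F.Finite ∧ F.ncard = k ∧ IsSuperEdgeCut G h F}

/-!
Write `S` for the cut and `A`, `B` for two nonempty parts of `Q_n - S` with no edges between them.
Every vertex outside `S` lies in a fault-free `Q_h`, so each of `A`, `B` has minimum degree at least
`h`; hence `|A|, |B| ≥ 2^h`. The bound `|S| ≥ 2^h (n - h)` is proved for `A`, `B` inside any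
subcube, by induction on its dimension. If some coordinate splits both `A` and `B`, each half of
the subcube carries the same configuration with `h - 1`, and the two bounds add up. Otherwise `A`
and `B` vary along disjoint sets of coordinates, so one of them, say `A`, lies in a subcube `C` of
dimension `d ≥ h` that misses `B`. Then `S` contains `C \ A` and the translates of `A` along the
`n - d` coordinates outside `C`, so `|S| ≥ 2^d + (n - d - 1) |A| ≥ 2^h (n - h)`.

For the upper bound take the vertices whose coordinates `≥ h` contain exactly one `1`. They
separate `0` from a vertex with two such `1`s, every other vertex keeps the `Q_h` obtained by
freeing its first `h` coordinates, and there are `2^h (n - h)` of them.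
-/

open Finset

lemma card_filter_apply_eq_add_card_filter_apply_eq_not {ι : Type*} (A : Finset (ι → Bool))
    (t : ι) (b : Bool) : #{x ∈ A | x t = b} + #{x ∈ A | x t = !b} = #A := by
  simp only [Bool.eq_not_iff, card_filter_add_card_filter_not]

lemma two_pow_mul_sub_le {h d k m : ℕ} (hm : 2 ^ h ≤ m) (hmd : m ≤ 2 ^ d) (hd : h ≤ d)
    (hdk : d < k) : 2 ^ h * (k - h) ≤ 2 ^ d - m + (k - d) * m := by
  obtain ⟨e, rfl⟩ := Nat.exists_eq_add_of_le hd
  obtain ⟨q, rfl⟩ := Nat.exists_eq_add_of_lt hdk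
  have he : 2 ^ h * (e + 1) ≤ 2 ^ h * 2 ^ e := Nat.mul_le_mul_left _ Nat.lt_two_pow_self
  rw [pow_add] at hmd ⊢
  zify [hmd, (by omega : h ≤ h + e + q + 1), (by omega : h + e ≤ h + e + q + 1)] at he ⊢
  nlinarith

lemma two_pow_mul_sub_le_two_mul {h k : ℕ} (hk : 2 ≤ k) :
    2 ^ h * (k - h) ≤ 2 * (2 ^ (h - 1) * (k - 1 - (h - 1))) := by
  rcases Nat.eq_zero_or_pos h with rfl | hh
  · simp only [pow_zero, one_mul, Nat.sub_zero]
    omega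
  · rw [← mul_assoc, ← pow_succ', Nat.sub_add_cancel hh, show k - 1 - (h - 1) = k - h by omega]

lemma two_pow_mul_sub_le_two_pow (h n : ℕ) : 2 ^ h * (n - h) ≤ 2 ^ n := by
  rcases le_total h n with hhn | hnh
  · calc 2 ^ h * (n - h) ≤ 2 ^ h * 2 ^ (n - h) := Nat.mul_le_mul_left _ Nat.lt_two_pow_self.le
      _ = 2 ^ n := by rw [← pow_add, Nat.add_sub_cancel' hhn]
  · simp [Nat.sub_eq_zero_of_le hnh]

section Cube

variable {ι : Type*} [DecidableEq ι]

def flipBit (x : ι → Bool) (i : ι) : ι → Bool := Function.update x i (!x i)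

@[simp] lemma flipBit_apply_self (x : ι → Bool) (i : ι) : flipBit x i i = !x i := by
  simp [flipBit]

lemma flipBit_apply_of_ne (x : ι → Bool) {i j : ι} (h : j ≠ i) : flipBit x i j = x j :=
  Function.update_of_ne h _ _

@[simp] lemma flipBit_flipBit (x : ι → Bool) (i : ι) : flipBit (flipBit x i) i = x := by
  simp [flipBit]

lemma flipBit_involutive (i : ι) : Function.Involutive (flipBit · i) :=
  fun x => flipBit_flipBit x i

lemma flipBit_right_injective (x : ι → Bool) : Function.Injective (flipBit x) := by
  intro i j hij
  by_contra hne
  simpa [flipBit_apply_of_ne x hne] using congrFun hij i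

variable [Fintype ι]

def subcube (K : Finset ι) (w : ι → Bool) : Finset (ι → Bool) := {x | ∀ i ∉ K, x i = w i}

lemma mem_subcube {K : Finset ι} {w x : ι → Bool} :
    x ∈ subcube K w ↔ ∀ i ∉ K, x i = w i := by
  simp [subcube]

lemma subcube_univ (w : ι → Bool) : subcube univ w = univ := by
  ext x
  simp [mem_subcube]

lemma card_subcube (K : Finset ι) (w : ι → Bool) : #(subcube K w) = 2 ^ #K := by
  have : subcube K w = Fintype.piFinset fun i => if i ∈ K then univ else {w i} := by
    ext x
    simp only [mem_subcube, Fintype.mem_piFinset]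
    refine forall_congr' fun i => ?_
    split_ifs <;> simp [*]
  rw [this, Fintype.card_piFinset]
  simp only [apply_ite Finset.card, card_univ, Fintype.card_bool, card_singleton]
  rw [Fintype.prod_ite_mem, prod_const]

lemma subcube_subset_subcube {K D : Finset ι} {w c : ι → Bool} (hDK : D ⊆ K)
    (hc : c ∈ subcube K w) : subcube D c ⊆ subcube K w := by
  intro x hx
  rw [mem_subcube] at *
  exact fun i hi => (hx i fun hD => hi (hDK hD)).trans (hc i hi)

lemma flipBit_mem_subcube_iff {K : Finset ι} {w x : ι → Bool} (hx : x ∈ subcube K w)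
    (i : ι) : flipBit x i ∈ subcube K w ↔ i ∈ K := by
  rw [mem_subcube] at *
  refine ⟨fun h => by_contra fun hi => ?_, fun hi j hj => ?_⟩
  · simpa [hx i hi] using h i hi
  · rw [flipBit_apply_of_ne x (ne_of_mem_of_not_mem hi hj).symm, hx j hj]

lemma exists_apply_ne_of_mem_subcube {K : Finset ι} {w x y : ι → Bool} (hx : x ∈ subcube K w)
    (hy : y ∈ subcube K w) (hxy : x ≠ y) : ∃ i ∈ K, x i ≠ y i := by
  obtain ⟨i, hi⟩ := Function.ne_iff.mp hxy
  refine ⟨i, by_contra fun hK => hi ?_, hi⟩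
  rw [mem_subcube.mp hx i hK, mem_subcube.mp hy i hK]

lemma eq_of_mem_subcube_of_disjoint {D E : Finset ι} {c e x y : ι → Bool} (hDE : Disjoint D E)
    (hxD : x ∈ subcube D c) (hyD : y ∈ subcube D c) (hxE : x ∈ subcube E e)
    (hyE : y ∈ subcube E e) : x = y := by
  rw [mem_subcube] at *
  funext i
  by_cases hi : i ∈ D
  · have hiE := disjoint_left.mp hDE hi
    rw [hxE i hiE, hyE i hiE]
  · rw [hxD i hi, hyD i hi]

lemma filter_subcube {K : Finset ι} {t : ι} (ht : t ∈ K) (w : ι → Bool) (b : Bool) :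
    {x ∈ subcube K w | x t = b} = subcube (K.erase t) (Function.update w t b) := by
  ext x
  simp only [mem_filter, mem_subcube, mem_erase, not_and]
  constructor
  · rintro ⟨hx, rfl⟩ i hi
    by_cases hit : i = t
    · simp [hit]
    · rw [Function.update_of_ne hit]
      exact hx i (hi hit)
  · intro hx
    refine ⟨fun i hi => ?_, by simpa using hx t fun h => absurd rfl h⟩
    rw [hx i fun _ => hi, Function.update_of_ne (ne_of_mem_of_not_mem ht hi).symm]

lemma filter_subset_subcube_erase {K : Finset ι} {t : ι} (ht : t ∈ K) {w : ι → Bool}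
    {X : Finset (ι → Bool)} (hX : X ⊆ subcube K w) (b : Bool) :
    {x ∈ X | x t = b} ⊆ subcube (K.erase t) (Function.update w t b) :=
  filter_subcube ht w b ▸ filter_subset_filter _ hX

lemma filter_subcube_sdiff {K : Finset ι} {t : ι} (ht : t ∈ K) (w : ι → Bool)
    (A B : Finset (ι → Bool)) (b : Bool) :
    {x ∈ subcube K w \ (A ∪ B) | x t = b} =
      subcube (K.erase t) (Function.update w t b) \
        ({x ∈ A | x t = b} ∪ {x ∈ B | x t = b}) := by
  rw [← filter_subcube ht]
  ext x
  simp only [mem_filter, mem_sdiff, mem_union]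
  tauto

def splitCoords (A : Finset (ι → Bool)) : Finset ι := {t | ∀ b : Bool, ∃ a ∈ A, a t = b}

lemma subset_subcube_splitCoords {A : Finset (ι → Bool)} {a : ι → Bool} (ha : a ∈ A) :
    A ⊆ subcube (splitCoords A) a := by
  intro x hx
  refine mem_subcube.mpr fun i hi => ?_
  simp only [splitCoords, mem_filter, mem_univ, true_and, not_forall, not_exists, not_and] at hi
  obtain ⟨b, hb⟩ := hi
  rw [Bool.eq_not_iff.mpr (hb x hx), Bool.eq_not_iff.mpr (hb a ha)]

lemma splitCoords_subset {K : Finset ι} {w : ι → Bool} {A : Finset (ι → Bool)}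
    (hA : A ⊆ subcube K w) : splitCoords A ⊆ K := by
  intro t ht
  by_contra hK
  obtain ⟨a, ha, hat⟩ := (mem_filter.mp ht).2 (!w t)
  simp [mem_subcube.mp (hA ha) t hK] at hat

def flipDegree (A : Finset (ι → Bool)) (x : ι → Bool) : ℕ := #{i | flipBit x i ∈ A}

lemma flipDegree_le_flipDegree {A A' : Finset (ι → Bool)} {x : ι → Bool}
    (h : ∀ i, flipBit x i ∈ A → flipBit x i ∈ A') : flipDegree A x ≤ flipDegree A' x :=
  card_le_card fun i hi => mem_filter.mpr ⟨mem_univ i, h i (mem_filter.mp hi).2⟩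

lemma flipDegree_le_flipDegree_filter_add_one (A : Finset (ι → Bool)) (x : ι → Bool)
    (t : ι) : flipDegree A x ≤ flipDegree {y ∈ A | y t = x t} x + 1 := by
  refine (card_le_card fun i hi => ?_).trans (card_insert_le t _)
  by_cases hit : i = t
  · simp [hit]
  · simp_all [flipBit_apply_of_ne x (Ne.symm hit)]

lemma sub_one_le_flipDegree_filter {h : ℕ} {A : Finset (ι → Bool)}
    (hdeg : ∀ a ∈ A, h ≤ flipDegree A a) (t : ι) (b : Bool) :
    ∀ a ∈ {x ∈ A | x t = b}, h - 1 ≤ flipDegree {x ∈ A | x t = b} a := by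
  intro a ha
  obtain ⟨haA, rfl⟩ := mem_filter.mp ha
  have := flipDegree_le_flipDegree_filter_add_one A a t
  have := hdeg a haA
  omega

lemma two_pow_le_card_of_le_flipDegree {h : ℕ} {A : Finset (ι → Bool)} (hA : A.Nonempty)
    (hdeg : ∀ a ∈ A, h ≤ flipDegree A a) : 2 ^ h ≤ #A := by
  induction h generalizing A with
  | zero => exact hA.card_pos
  | succ h ih =>
    obtain ⟨a, ha⟩ := hA
    obtain ⟨t, ht⟩ : ∃ t, flipBit a t ∈ A := by
      obtain ⟨t, ht⟩ := card_pos.mp (Nat.succ_pos h |>.trans_le (hdeg a ha))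
      exact ⟨t, (mem_filter.mp ht).2⟩
    have half (b : ι → Bool) (hb : b ∈ A) : 2 ^ h ≤ #{x ∈ A | x t = b t} :=
      ih ⟨b, mem_filter.mpr ⟨hb, rfl⟩⟩ (sub_one_le_flipDegree_filter hdeg t (b t))
    calc 2 ^ (h + 1) = 2 ^ h + 2 ^ h := by ring
      _ ≤ #{x ∈ A | x t = a t} + #{x ∈ A | x t = !a t} :=
        add_le_add (half a ha) (by simpa using half _ ht)
      _ = #A := card_filter_apply_eq_add_card_filter_apply_eq_not A t (a t)

def translates (A : Finset (ι → Bool)) (T : Finset ι) : Finset (ι → Bool) :=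
  T.biUnion fun t => A.image (flipBit · t)

lemma mem_translates {A : Finset (ι → Bool)} {T : Finset ι} {y : ι → Bool} :
    y ∈ translates A T ↔ ∃ t ∈ T, ∃ x ∈ A, flipBit x t = y := by
  simp [translates]

lemma flipBit_not_mem_subcube {D : Finset ι} {c x : ι → Bool} (hx : x ∈ subcube D c) {t : ι}
    (ht : t ∉ D) : flipBit x t ∉ subcube D c :=
  fun h => ht ((flipBit_mem_subcube_iff hx t).mp h)

lemma disjoint_subcube_translates {D T : Finset ι} {c : ι → Bool} {A : Finset (ι → Bool)}
    (hA : A ⊆ subcube D c) (hT : Disjoint T D) : Disjoint (subcube D c) (translates A T) := by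
  refine disjoint_right.mpr fun y hy => ?_
  obtain ⟨t, ht, x, hx, rfl⟩ := mem_translates.mp hy
  exact flipBit_not_mem_subcube (hA hx) (disjoint_left.mp hT ht)

lemma card_translates {D T : Finset ι} {c : ι → Bool} {A : Finset (ι → Bool)}
    (hA : A ⊆ subcube D c) (hT : Disjoint T D) : #(translates A T) = #T * #A := by
  rw [translates, card_biUnion, ← smul_eq_mul, ← sum_const]
  · exact sum_congr rfl fun t _ => card_image_of_injective _ (flipBit_involutive t).injective
  · intro s hs t _ hst
    refine disjoint_left.mpr fun y hys hyt => ?_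
    obtain ⟨x, hx, rfl⟩ := mem_image.mp hys
    obtain ⟨x', hx', hxx'⟩ := mem_image.mp hyt
    have hsD := disjoint_left.mp hT hs
    have := congrFun hxx' s
    rw [flipBit_apply_of_ne x' hst, flipBit_apply_self, mem_subcube.mp (hA hx) s hsD,
      mem_subcube.mp (hA hx') s hsD] at this
    exact Bool.not_ne_self _ this.symm

/-- The complement of `A ∪ B` contains `subcube D c \ A` and the translates of `A` along `K \ D`,
which leave `subcube D c` and cannot meet `B`. -/
lemma two_pow_mul_le_card_sdiff_of_disjoint_subcube {h : ℕ} {K D : Finset ι} {w c : ι → Bool}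
    {A B : Finset (ι → Bool)} (hDK : D ⊆ K) (hc : c ∈ subcube K w) (hA : A ⊆ subcube D c)
    (hB : B ⊆ subcube K w) (hBD : Disjoint B (subcube D c)) (hBne : B.Nonempty)
    (hAne : A.Nonempty) (hAB : ∀ a ∈ A, ∀ i, flipBit a i ∉ B)
    (hdeg : ∀ a ∈ A, h ≤ flipDegree A a) :
    2 ^ h * (#K - h) ≤ #(subcube K w \ (A ∪ B)) := by
  obtain ⟨a, ha⟩ := hAne
  have hDK' : #D < #K := by
    refine card_lt_card (Finset.ssubset_iff_subset_ne.mpr ⟨hDK, ?_⟩)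
    rintro rfl
    obtain ⟨b, hb⟩ := hBne
    refine disjoint_left.mp hBD hb (mem_subcube.mpr fun i hi => ?_)
    rw [mem_subcube.mp (hB hb) i hi, mem_subcube.mp hc i hi]
  have hhD : h ≤ #D := (hdeg a ha).trans <| card_le_card fun i hi =>
    (flipBit_mem_subcube_iff (hA ha) i).mp (hA (mem_filter.mp hi).2)
  have hAD : #A ≤ 2 ^ #D := card_subcube D c ▸ card_le_card hA
  have hT : Disjoint (K \ D) D := sdiff_disjoint
  have hsub : (subcube D c \ A) ∪ translates A (K \ D) ⊆ subcube K w \ (A ∪ B) := by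
    refine union_subset (fun y hy => ?_) (fun y hy => ?_)
    · obtain ⟨hyD, hyA⟩ := mem_sdiff.mp hy
      exact mem_sdiff.mpr ⟨subcube_subset_subcube hDK hc hyD, mem_union.not.mpr
        (not_or.mpr ⟨hyA, fun hyB => disjoint_left.mp hBD hyB hyD⟩)⟩
    · obtain ⟨t, ht, x, hx, rfl⟩ := mem_translates.mp hy
      obtain ⟨htK, htD⟩ := mem_sdiff.mp ht
      exact mem_sdiff.mpr ⟨(flipBit_mem_subcube_iff (subcube_subset_subcube hDK hc (hA hx)) t).mpr
        htK, mem_union.not.mpr (not_or.mpr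
          ⟨fun hA' => flipBit_not_mem_subcube (hA hx) htD (hA hA'), hAB x hx t⟩)⟩
  calc 2 ^ h * (#K - h) ≤ 2 ^ #D - #A + (#K - #D) * #A :=
        two_pow_mul_sub_le (two_pow_le_card_of_le_flipDegree ⟨a, ha⟩ hdeg) hAD hhD hDK'
    _ = #((subcube D c \ A) ∪ translates A (K \ D)) := by
        rw [card_union_of_disjoint ((disjoint_subcube_translates hA hT).mono_left sdiff_subset),
          card_sdiff_of_subset hA, card_subcube, card_translates hA hT, card_sdiff_of_subset hDK]
    _ ≤ _ := card_le_card hsub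

/-- If no coordinate splits both `A` and `B`, their subcubes span disjoint sets of coordinates and
so share at most one point; hence one of `A`, `B` misses the subcube of the other. -/
lemma two_pow_mul_le_card_sdiff_of_disjoint_splitCoords {h : ℕ} {K : Finset ι} {w : ι → Bool}
    {A B : Finset (ι → Bool)} (hsplit : Disjoint (splitCoords A) (splitCoords B))
    (hA : A ⊆ subcube K w) (hB : B ⊆ subcube K w) (hAne : A.Nonempty) (hBne : B.Nonempty)
    (hAB : Disjoint A B) (hedge : ∀ a ∈ A, ∀ i, flipBit a i ∉ B)
    (hdegA : ∀ a ∈ A, h ≤ flipDegree A a) (hdegB : ∀ b ∈ B, h ≤ flipDegree B b) :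
    2 ^ h * (#K - h) ≤ #(subcube K w \ (A ∪ B)) := by
  obtain ⟨a, ha⟩ := hAne
  obtain ⟨b, hb⟩ := hBne
  have hA' := subset_subcube_splitCoords ha
  have hB' := subset_subcube_splitCoords hb
  by_cases hBA : Disjoint B (subcube (splitCoords A) a)
  · exact two_pow_mul_le_card_sdiff_of_disjoint_subcube (splitCoords_subset hA) (hA ha) hA' hB
      hBA ⟨b, hb⟩ ⟨a, ha⟩ hedge hdegA
  · have hAB' : Disjoint A (subcube (splitCoords B) b) := by
      obtain ⟨y, hyB, hyA⟩ := not_disjoint_iff.mp hBA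
      refine disjoint_left.mpr fun x hx hxB => disjoint_left.mp hAB hx ?_
      rwa [eq_of_mem_subcube_of_disjoint hsplit (hA' hx) hyA hxB (hB' hyB)]
    rw [union_comm]
    exact two_pow_mul_le_card_sdiff_of_disjoint_subcube (splitCoords_subset hB) (hB hb) hB' hA
      hAB' ⟨a, ha⟩ ⟨b, hb⟩ (fun y hy i hi => hedge _ hi i (by simpa using hy)) hdegB

theorem two_pow_mul_le_card_subcube_sdiff {h : ℕ} {K : Finset ι} {w : ι → Bool}
    {A B : Finset (ι → Bool)} (hA : A ⊆ subcube K w) (hB : B ⊆ subcube K w)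
    (hAne : A.Nonempty) (hBne : B.Nonempty) (hAB : Disjoint A B)
    (hedge : ∀ a ∈ A, ∀ i, flipBit a i ∉ B)
    (hdegA : ∀ a ∈ A, h ≤ flipDegree A a) (hdegB : ∀ b ∈ B, h ≤ flipDegree B b) :
    2 ^ h * (#K - h) ≤ #(subcube K w \ (A ∪ B)) := by
  by_cases hsplit : Disjoint (splitCoords A) (splitCoords B)
  · exact two_pow_mul_le_card_sdiff_of_disjoint_splitCoords hsplit hA hB hAne hBne hAB hedge
      hdegA hdegB
  obtain ⟨t, htA, htB⟩ := not_disjoint_iff.mp hsplit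
  have htK := splitCoords_subset hA htA
  have half (b : Bool) :
      2 ^ (h - 1) * (#K - 1 - (h - 1)) ≤ #{x ∈ subcube K w \ (A ∪ B) | x t = b} := by
    rw [filter_subcube_sdiff htK, ← card_erase_of_mem htK]
    exact two_pow_mul_le_card_subcube_sdiff (filter_subset_subcube_erase htK hA b)
      (filter_subset_subcube_erase htK hB b) (filter_nonempty_iff.mpr ((mem_filter.mp htA).2 b))
      (filter_nonempty_iff.mpr ((mem_filter.mp htB).2 b)) (disjoint_filter_filter hAB)
      (fun a ha i hi => hedge a (mem_filter.mp ha).1 i (mem_filter.mp hi).1)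
      (sub_one_le_flipDegree_filter hdegA t b) (sub_one_le_flipDegree_filter hdegB t b)
  have hK : 2 ≤ #K := by
    obtain ⟨a, ha, hat⟩ := (mem_filter.mp htA).2 true
    obtain ⟨b, hb, hbt⟩ := (mem_filter.mp htB).2 true
    obtain ⟨i, hi, hne⟩ := exists_apply_ne_of_mem_subcube (hA ha) (hB hb)
      fun hab => disjoint_left.mp hAB ha (hab ▸ hb)
    have hit : i ≠ t := by
      rintro rfl
      exact hne (hat.trans hbt.symm)
    calc 2 = #{i, t} := (card_pair hit).symm
      _ ≤ #K := card_le_card (insert_subset hi (singleton_subset_iff.mpr htK))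
  calc 2 ^ h * (#K - h) ≤ 2 * (2 ^ (h - 1) * (#K - 1 - (h - 1))) :=
        two_pow_mul_sub_le_two_mul hK
    _ ≤ #{x ∈ subcube K w \ (A ∪ B) | x t = true} +
        #{x ∈ subcube K w \ (A ∪ B) | x t = !true} := by
        rw [two_mul]
        exact add_le_add (half _) (half _)
    _ = #(subcube K w \ (A ∪ B)) := card_filter_apply_eq_add_card_filter_apply_eq_not _ t true
termination_by #K
decreasing_by exact card_erase_lt_of_mem htK

theorem two_pow_mul_le_card_of_flipBit_closed {h : ℕ} {S A : Finset (ι → Bool)}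
    (hAS : Disjoint A S) (hA : A.Nonempty) (hB : ∃ y ∉ S, y ∉ A)
    (hclosed : ∀ a ∈ A, ∀ i, flipBit a i ∉ S → flipBit a i ∈ A)
    (hdeg : ∀ x ∉ S, h ≤ flipDegree Sᶜ x) :
    2 ^ h * (Fintype.card ι - h) ≤ #S := by
  obtain ⟨y, hyS, hyA⟩ := hB
  have hclosedB (b : ι → Bool) (hb : b ∈ (A ∪ S)ᶜ) (i : ι) (hi : flipBit b i ∈ Sᶜ) :
      flipBit b i ∈ (A ∪ S)ᶜ := by
    simp only [mem_compl, mem_union, not_or] at hb hi ⊢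
    exact ⟨fun hA => hb.1 (by simpa using hclosed _ hA i (by simpa using hb.2)), hi⟩
  have hS : subcube univ y \ (A ∪ (A ∪ S)ᶜ) = S := by
    ext x
    have := fun hx : x ∈ A => disjoint_left.mp hAS hx
    simp only [subcube_univ, mem_sdiff, mem_univ, mem_union, mem_compl]
    tauto
  rw [← hS, ← card_univ]
  refine two_pow_mul_le_card_subcube_sdiff (by simp [subcube_univ]) (by simp [subcube_univ]) hA
    ⟨y, by simp [hyS, hyA]⟩ (disjoint_compl_right.mono_right (compl_subset_compl.mpr
      subset_union_left)) (fun a ha i hi => mem_compl.mp hi (mem_union_left _ ?_))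
    (fun a ha => (hdeg a (disjoint_left.mp hAS ha)).trans (flipDegree_le_flipDegree fun i hi =>
      hclosed a ha i (mem_compl.mp hi)))
    (fun b hb => (hdeg b (by simp_all)).trans (flipDegree_le_flipDegree (hclosedB b hb)))
  exact hclosed a ha i fun hS' => mem_compl.mp hi (mem_union_right _ hS')

def oneHotOutside (L : Finset ι) : Finset (ι → Bool) :=
  Lᶜ.biUnion fun j => subcube L fun i => decide (i = j)

lemma card_oneHotOutside (L : Finset ι) : #(oneHotOutside L) = 2 ^ #L * #Lᶜ := by
  rw [oneHotOutside, card_biUnion, sum_congr rfl fun _ _ => card_subcube _ _, sum_const,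
    smul_eq_mul, mul_comm]
  intro j hj k _ hjk
  refine disjoint_left.mpr fun x hxj hxk => hjk ?_
  have hjL := mem_compl.mp hj
  simpa using (mem_subcube.mp hxj j hjL).symm.trans (mem_subcube.mp hxk j hjL)

lemma mem_oneHotOutside_iff_of_mem_subcube {L : Finset ι} {x v : ι → Bool}
    (hx : x ∈ subcube L v) : x ∈ oneHotOutside L ↔ v ∈ oneHotOutside L := by
  simp only [oneHotOutside, mem_biUnion, mem_subcube]
  exact exists_congr fun j => and_congr_right fun _ => forall_congr' fun i =>
    imp_congr_right fun hi => by rw [mem_subcube.mp hx i hi]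

end Cube

lemma cubeGraph_adj_iff {n : ℕ} {x y : Fin n → Bool} :
    (cubeGraph n).Adj x y ↔ ∃ i, y = flipBit x i := by
  constructor
  · rintro ⟨i, hi, hu⟩
    refine ⟨i, funext fun j => ?_⟩
    by_cases hj : j = i
    · subst hj
      simpa [Bool.eq_not_iff] using hi.symm
    · rw [flipBit_apply_of_ne x hj]
      exact by_contra fun h => hj (hu j (Ne.symm h))
  · rintro ⟨i, rfl⟩
    exact ⟨i, by simp, fun j hj => by_contra fun hji => hj (flipBit_apply_of_ne x hji).symm⟩

lemma le_flipDegree_of_iso {n h : ℕ} {A : Set (Fin n → Bool)} {T : Finset (Fin n → Bool)}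
    (hAT : A ⊆ T) {v : Fin n → Bool} (hv : v ∈ A)
    (φ : cubeGraph h ≃g (cubeGraph n).induce A) : h ≤ flipDegree T v := by
  set y := φ.symm ⟨v, hv⟩
  have hadj (j : Fin h) : (cubeGraph n).Adj v (φ (flipBit y j)) := by
    have : (cubeGraph h).Adj y (flipBit y j) := cubeGraph_adj_iff.mpr ⟨j, rfl⟩
    simpa [y] using φ.map_adj_iff.mpr this
  choose c hc using fun j => cubeGraph_adj_iff.mp (hadj j)
  have hinj : Function.Injective c := fun j j' hjj' =>
    flipBit_right_injective y (φ.injective (Subtype.ext ((hc j).trans (hjj' ▸ (hc j').symm))))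
  calc h = #(univ : Finset (Fin h)) := by simp
    _ ≤ flipDegree T v := card_le_card_of_injOn c
        (fun j _ => mem_filter.mpr ⟨mem_univ _, hc j ▸ hAT (φ (flipBit y j)).2⟩) hinj.injOn

theorem two_pow_mul_le_ncard_of_isEmbVertexCut {n h : ℕ} {S : Set (Fin n → Bool)}
    (hS : IsEmbVertexCut (cubeGraph n) (cubeGraph h) S) : 2 ^ h * (n - h) ≤ S.ncard := by
  classical
  obtain ⟨hdisc, hcopy⟩ := hS
  rw [Set.ncard_eq_toFinset_card']
  rcases Set.eq_empty_or_nonempty Sᶜ with hS | hS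
  · simpa [Set.compl_empty_iff.mp hS] using two_pow_mul_sub_le_two_pow h n
  have : Nonempty ↥Sᶜ := hS.to_subtype
  set G := (cubeGraph n).induce Sᶜ
  obtain ⟨u, v, huv⟩ : ∃ u v, ¬ G.Reachable u v := by
    by_contra! h
    exact hdisc ⟨h⟩
  let A : Finset (Fin n → Bool) := {z | ∃ hz : z ∈ Sᶜ, G.Reachable u ⟨z, hz⟩}
  have mem_A {z : Fin n → Bool} : z ∈ A ↔ ∃ hz : z ∈ Sᶜ, G.Reachable u ⟨z, hz⟩ := by
    simp [A]
  have hclosed (a : Fin n → Bool) (ha : a ∈ A) (i : Fin n) (hi : flipBit a i ∉ S.toFinset) :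
      flipBit a i ∈ A := by
    obtain ⟨_, hr⟩ := mem_A.mp ha
    exact mem_A.mpr ⟨by simpa using hi,
      hr.trans (Adj.reachable (by simpa [G] using cubeGraph_adj_iff.mpr ⟨i, rfl⟩))⟩
  have hdeg (x : Fin n → Bool) (hx : x ∉ S.toFinset) : h ≤ flipDegree S.toFinsetᶜ x := by
    obtain ⟨C, hxC, hCS, ⟨φ⟩⟩ := hcopy x (by simpa using hx)
    exact le_flipDegree_of_iso (fun z hz => by simpa using Set.disjoint_left.mp hCS hz) hxC φ
  simpa using two_pow_mul_le_card_of_flipBit_closed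
    (disjoint_left.mpr fun z hz => by simpa using (mem_A.mp hz).1)
    ⟨u, mem_A.mpr ⟨u.2, .rfl⟩⟩
    ⟨v, Set.mem_toFinset.not.mpr v.2, fun hv => huv (mem_A.mp hv).2⟩ hclosed hdeg

/-- Leaving the vertices that vanish outside `L` means flipping a coordinate outside `L`, which
lands in the cut. -/
lemma not_connected_induce_compl_oneHotOutside {n : ℕ} {L : Finset (Fin n)} {j₁ j₂ : Fin n}
    (h₁ : j₁ ∉ L) (h₂ : j₂ ∉ L) (hj : j₁ ≠ j₂) :
    ¬ ((cubeGraph n).induce (↑(oneHotOutside L))ᶜ).Connected := by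
  set G := (cubeGraph n).induce (↑(oneHotOutside L))ᶜ
  have hclosed {a b : ↥(↑(oneHotOutside L) : Set (Fin n → Bool))ᶜ} (hab : G.Adj a b)
      (ha : a.1 ∈ subcube L fun _ => false) : b.1 ∈ subcube L fun _ => false := by
    obtain ⟨i, hi⟩ := cubeGraph_adj_iff.mp hab
    replace hi : b.1 = flipBit a.1 i := hi
    rw [hi, flipBit_mem_subcube_iff ha]
    by_contra hiL
    refine b.2 (mem_biUnion.mpr ⟨i, mem_compl.mpr hiL, mem_subcube.mpr fun k hk => ?_⟩)
    rw [hi]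
    by_cases hki : k = i
    · simp [hki, mem_subcube.mp ha i hiL]
    · simp [hki, flipBit_apply_of_ne _ hki, mem_subcube.mp ha k hk]
  have hwalk {a b} (p : G.Walk a b) (ha : a.1 ∈ subcube L fun _ => false) :
      b.1 ∈ subcube L fun _ => false := by
    induction p with
    | nil => exact ha
    | cons hadj _ ih => exact ih (hclosed hadj ha)
  intro hconn
  have hzero : (fun _ => false) ∉ oneHotOutside L := by
    simp only [oneHotOutside, mem_biUnion, mem_subcube, not_exists, not_and, not_forall]
    exact fun j hj => ⟨j, mem_compl.mp hj, by simp⟩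
  have htwo : (fun i => decide (i = j₁ ∨ i = j₂)) ∉ oneHotOutside L := by
    simp only [oneHotOutside, mem_biUnion, mem_subcube, not_exists, not_and]
    intro j _ hx
    have e₁ := hx j₁ h₁
    have e₂ := hx j₂ h₂
    simp only [true_or, or_true, decide_true] at e₁ e₂
    exact hj ((of_decide_eq_true e₁.symm).trans (of_decide_eq_true e₂.symm).symm)
  obtain ⟨p⟩ := hconn.preconnected ⟨_, hzero⟩ ⟨_, htwo⟩
  simpa using mem_subcube.mp (hwalk p (by simp [mem_subcube])) j₁ h₁

def replaceFirst {n h : ℕ} (v : Fin n → Bool) (x : Fin h → Bool) : Fin n → Bool :=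
  fun i => if hi : (i : ℕ) < h then x ⟨i, hi⟩ else v i

lemma replaceFirst_flipBit {n h : ℕ} (hhn : h ≤ n) (v : Fin n → Bool) (x : Fin h → Bool)
    (j : Fin h) :
    replaceFirst v (flipBit x j) = flipBit (replaceFirst v x) (Fin.castLE hhn j) := by
  funext i
  by_cases hij : i = Fin.castLE hhn j
  · subst hij
    simp [replaceFirst]
  · rw [flipBit_apply_of_ne _ hij]
    unfold replaceFirst
    split_ifs with hi
    · exact flipBit_apply_of_ne _ fun h => hij (Fin.ext (by simp [← h]))
    · rfl

lemma replaceFirst_injective {n h : ℕ} (hhn : h ≤ n) (v : Fin n → Bool) :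
    Function.Injective (replaceFirst (h := h) v) := by
  intro x y hxy
  funext j
  simpa [replaceFirst] using congrFun hxy (Fin.castLE hhn j)

def cubeGraphIsoInduceSubcube {n h : ℕ} (hhn : h ≤ n) (v : Fin n → Bool) :
    cubeGraph h ≃g (cubeGraph n).induce ↑(subcube {i : Fin n | (i : ℕ) < h} v) where
  toFun x := ⟨replaceFirst v x, by simp +contextual [mem_subcube, replaceFirst]⟩
  invFun y j := y.1 (Fin.castLE hhn j)
  left_inv x := by
    funext j
    simp [replaceFirst]
  right_inv y := by
    ext i
    have := mem_subcube.mp (Finset.mem_coe.mp y.2) i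
    by_cases hi : (i : ℕ) < h <;> simp_all [replaceFirst]
  map_rel_iff' {x y} := by
    simp only [Equiv.coe_fn_mk, comap_adj, Function.Embedding.coe_subtype, cubeGraph_adj_iff]
    constructor
    · rintro ⟨i, hi⟩
      by_cases hih : (i : ℕ) < h
      · refine ⟨⟨i, hih⟩, replaceFirst_injective hhn v ?_⟩
        rw [hi, replaceFirst_flipBit hhn]
        rfl
      · simpa [replaceFirst, hih] using congrFun hi i
    · rintro ⟨j, rfl⟩
      exact ⟨Fin.castLE hhn j, replaceFirst_flipBit hhn v x j⟩

theorem isEmbVertexCut_oneHotOutside {n h : ℕ} (hhn : h + 2 ≤ n) :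
    IsEmbVertexCut (cubeGraph n) (cubeGraph h) ↑(oneHotOutside {i : Fin n | (i : ℕ) < h}) := by
  refine ⟨not_connected_induce_compl_oneHotOutside (j₁ := ⟨h, by omega⟩)
    (j₂ := ⟨h + 1, by omega⟩) (by simp) (by simp) (by simp), fun v hv => ?_⟩
  refine ⟨↑(subcube {i : Fin n | (i : ℕ) < h} v), by simp [mem_subcube], ?_,
    ⟨cubeGraphIsoInduceSubcube (by omega) v⟩⟩
  exact Set.disjoint_left.mpr fun x hx hxS =>
    hv ((mem_oneHotOutside_iff_of_mem_subcube (mem_coe.mp hx)).mp hxS)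

theorem stmt3_general (n h : ℕ) (h2 : h + 2 ≤ n) :
    embConn (cubeGraph n) (cubeGraph h) = 2 ^ h * (n - h) := by
  set S := oneHotOutside ({i | (i : ℕ) < h} : Finset (Fin n))
  have hS : (S : Set (Fin n → Bool)).ncard = 2 ^ h * (n - h) := by
    rw [Set.ncard_coe_finset, card_oneHotOutside, card_compl, Fin.card_filter_val_lt,
      min_eq_right (by omega), Fintype.card_fin]
  have hmem : 2 ^ h * (n - h) ∈ {k | ∃ S : Set (Fin n → Bool), S.Finite ∧ S.ncard = k ∧
      IsEmbVertexCut (cubeGraph n) (cubeGraph h) S} :=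
    ⟨S, S.finite_toSet, hS, isEmbVertexCut_oneHotOutside h2⟩
  refine le_antisymm (Nat.sInf_le hmem) (le_csInf ⟨_, hmem⟩ ?_)
  rintro k ⟨T, -, rfl, hT⟩
  exact two_pow_mul_le_ncard_of_isEmbVertexCut hT

/-- `ζ_h(Q_n) = 2^h (n-h)` for `1 ≤ h ≤ n-2`. -/
theorem stmt3 (n h : ℕ) (h1 : 1 ≤ h) (h2 : h + 2 ≤ n) :
    embConn (cubeGraph n) (cubeGraph h) = 2 ^ h * (n - h) :=
  stmt3_general n h h2
end

section
/- Let X be the vertex set { p_1 … p_h 1 2 ⋯ (n−h) : p_i ∈ {n−h+1,…,n} } in the star graph S_n with 1 ≤ h ≤ n−1. Then every vertex of X has exactly n−h neighbors outside X, every vertex outside X adjacent to X has exactly one neighbor in X, and the set T of neighbors of X outside X has cardinality h!(n−h). -/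
open SimpleGraph

/-!
`X` is the set of permutations that agree on the positions `S = {j | h ≤ j}` with a fixed
permutation `c`, and the first position `0` is not in `S`. Swapping position `0` with a position
`i ∉ S` stays in `X`, while swapping it with `i ∈ S` leaves `X`, because the new value at `i` is
the old value at `0`, which differs from `c i`. A neighbour `q = p * swap 0 i` of `p ∈ X` outside
`X` remembers `i` through `q 0 = c i`, hence also `p`. So `(p, i) ↦ p * swap 0 i` is a bijection
from `X × S` onto the outer neighbourhood of `X`, and `|X| = (n - |S|)! = h!`.
-/

open Equiv Set Nat

namespace Equiv.Perm

variable {α : Type*}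

section Card

variable [Finite α]

theorem ncard_setOf_forall_mem_apply_eq_self (S : Set α) :
    {σ : Perm α | ∀ a ∈ S, σ a = a}.ncard = (Nat.card α - S.ncard)! := by
  classical
  have e := Perm.subtypeEquivSubtypePerm (· ∉ S)
  simp only [not_not] at e
  rw [← Nat.card_coe_set_eq]
  refine (Nat.card_congr e.symm).trans ?_
  rw [Nat.card_perm, ← ncard_compl]
  rfl

theorem ncard_setOf_eqOn (c : Perm α) (S : Set α) :
    {p : Perm α | EqOn p c S}.ncard = (Nat.card α - S.ncard)! := by
  have himage : {p : Perm α | EqOn p c S} = (c * ·) '' {σ | ∀ a ∈ S, σ a = a} := by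
    ext p
    refine ⟨fun hp => ⟨c⁻¹ * p, fun a ha => ?_, mul_inv_cancel_left c p⟩, ?_⟩
    · simp [hp ha]
    · rintro ⟨σ, hσ, rfl⟩ a ha
      simp [hσ a ha]
  rw [himage, ncard_image_of_injective _ (mul_right_injective c),
    ncard_setOf_forall_mem_apply_eq_self]

end Card

section Swap

variable [DecidableEq α] {a₀ i j : α} {S : Set α} {c p q : Perm α}

theorem eqOn_mul_swap_iff (hS : a₀ ∉ S) (hp : EqOn p c S) :
    EqOn (p * swap a₀ i) c S ↔ i ∉ S := by
  constructor
  · intro hq hi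
    have hpi : p a₀ = p i := by
      simpa [hp hi] using hq hi
    exact ne_of_mem_of_not_mem hi hS (p.injective hpi).symm
  · intro hi j hj
    rw [mul_apply, swap_apply_of_ne_of_ne (ne_of_mem_of_not_mem hj hS)
      (ne_of_mem_of_not_mem hj hi)]
    exact hp hj

theorem not_eqOn_mul_swap_of_mem (hS : a₀ ∉ S) (hp : EqOn p c S) (hi : i ∈ S) :
    ¬EqOn (p * swap a₀ i) c S :=
  fun h => (eqOn_mul_swap_iff hS hp).mp h hi

theorem eq_of_mul_swap_eq_mul_swap (hp : EqOn p c S) (hq : EqOn q c S) (hi : i ∈ S)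
    (hj : j ∈ S) (h : p * swap a₀ i = q * swap a₀ j) : p = q ∧ i = j := by
  have hij : i = j := by
    have h₀ := congrArg (· a₀) h
    simp only [mul_apply, swap_apply_left] at h₀
    exact c.injective (by rw [← hp hi, ← hq hj, h₀])
  subst hij
  exact ⟨mul_right_cancel h, rfl⟩

end Swap

end Equiv.Perm

section StarGraph

variable {n : ℕ} [NeZero n] {S : Set (Fin n)} {c p q r : Perm (Fin n)}

theorem exists_mem_eq_mul_swap_of_starGraph_adj (hS : 0 ∉ S) (hp : EqOn p c S)
    (hq : ¬EqOn q c S) (hpq : (_root_.starGraph n).Adj p q) : ∃ i ∈ S, q = p * swap 0 i := by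
  obtain ⟨i, -, rfl⟩ := hpq
  exact ⟨i, not_not.mp ((Perm.eqOn_mul_swap_iff hS hp).not.mp hq), rfl⟩

theorem starGraph_adj_mul_swap (hS : 0 ∉ S) {i : Fin n} (hi : i ∈ S) :
    (_root_.starGraph n).Adj p (p * swap 0 i) :=
  ⟨i, ne_of_mem_of_not_mem hi hS, rfl⟩

theorem starGraph_neighbors_diff_eqOn (hS : 0 ∉ S) (hp : EqOn p c S) :
    {q | (_root_.starGraph n).Adj p q} \ {q : Perm (Fin n) | EqOn q c S} =
      (p * swap 0 ·) '' S := by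
  ext q
  constructor
  · rintro ⟨hpq, hq⟩
    obtain ⟨i, hi, rfl⟩ := exists_mem_eq_mul_swap_of_starGraph_adj hS hp hq hpq
    exact ⟨i, hi, rfl⟩
  · rintro ⟨i, hi, rfl⟩
    exact ⟨starGraph_adj_mul_swap hS hi, Perm.not_eqOn_mul_swap_of_mem hS hp hi⟩

theorem ncard_starGraph_neighbors_diff_eqOn (hS : 0 ∉ S) (hp : EqOn p c S) :
    ({q | (_root_.starGraph n).Adj p q} \ {q : Perm (Fin n) | EqOn q c S}).ncard = S.ncard := by
  rw [starGraph_neighbors_diff_eqOn hS hp]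
  exact InjOn.ncard_image fun i hi j hj h => (Perm.eq_of_mul_swap_eq_mul_swap hp hp hi hj h).2

theorem eq_of_starGraph_adj_of_not_eqOn (hS : 0 ∉ S) (hq : ¬EqOn q c S) (hp : EqOn p c S)
    (hr : EqOn r c S) (hqp : (_root_.starGraph n).Adj q p) (hqr : (_root_.starGraph n).Adj q r) :
    p = r := by
  obtain ⟨i, hi, rfl⟩ := exists_mem_eq_mul_swap_of_starGraph_adj hS hp hq hqp.symm
  obtain ⟨j, hj, hij⟩ := exists_mem_eq_mul_swap_of_starGraph_adj hS hr hq hqr.symm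
  exact (Perm.eq_of_mul_swap_eq_mul_swap hp hr hi hj hij).1

theorem starGraph_outerNeighbors_eqOn_eq_image (hS : 0 ∉ S) :
    {q : Perm (Fin n) |
        ¬EqOn q c S ∧ ∃ p : Perm (Fin n), EqOn p c S ∧ (_root_.starGraph n).Adj p q} =
      (fun x : Perm (Fin n) × Fin n => x.1 * swap 0 x.2) ''
        ({p : Perm (Fin n) | EqOn p c S} ×ˢ S) := by
  ext q
  constructor
  · rintro ⟨hq, p, hp, hpq⟩
    obtain ⟨i, hi, rfl⟩ := exists_mem_eq_mul_swap_of_starGraph_adj hS hp hq hpq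
    exact ⟨(p, i), ⟨hp, hi⟩, rfl⟩
  · rintro ⟨⟨p, i⟩, ⟨hp, hi⟩, rfl⟩
    exact ⟨Perm.not_eqOn_mul_swap_of_mem hS hp hi, p, hp, starGraph_adj_mul_swap hS hi⟩

theorem ncard_starGraph_outerNeighbors_eqOn (hS : 0 ∉ S) :
    {q : Perm (Fin n) |
        ¬EqOn q c S ∧ ∃ p : Perm (Fin n), EqOn p c S ∧ (_root_.starGraph n).Adj p q}.ncard =
      (n - S.ncard)! * S.ncard := by
  rw [starGraph_outerNeighbors_eqOn_eq_image hS, InjOn.ncard_image, ncard_prod,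
    Perm.ncard_setOf_eqOn, Nat.card_fin]
  rintro ⟨p, i⟩ ⟨hp, hi⟩ ⟨r, j⟩ ⟨hr, hj⟩ h
  obtain ⟨rfl, rfl⟩ := Perm.eq_of_mul_swap_eq_mul_swap hp hr hi hj h
  rfl

end StarGraph

theorem Fin.exists_perm_val_apply_eq_sub {n h : ℕ} (h1 : 1 ≤ h) (h2 : h ≤ n) :
    ∃ c : Perm (Fin n), ∀ j : Fin n, h ≤ (j : ℕ) → (c j : ℕ) = j - h := by
  have : NeZero n := ⟨by omega⟩
  refine ⟨Equiv.addRight ⟨n - h, by omega⟩, fun j hj => ?_⟩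
  rw [coe_addRight, Fin.val_add_eq_ite]
  split_ifs <;> simp_all only [not_le] <;> omega

theorem Fin.ncard_setOf_le_val {n : ℕ} (h : ℕ) :
    {j : Fin n | h ≤ (j : ℕ)}.ncard = n - h := by
  have hcompl : {j : Fin n | h ≤ (j : ℕ)} = {j : Fin n | (j : ℕ) < h}ᶜ := by
    ext
    simp
  rw [hcompl, ncard_compl, Nat.card_fin, ncard_eq_toFinset_card', toFinset_ofPred,
    Fin.card_filter_val_lt]
  omega

/-- With `X = {p : pₕ₊₁ … pₙ = 1 2 ⋯ (n-h)}` in `S_n` (0-indexed: position `j ≥ h`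
carries digit `j - h`), every vertex of `X` has exactly `n-h` neighbors outside `X`, every vertex
outside `X` adjacent to `X` has exactly one neighbor in `X`, and the set `T` of outside neighbors
of `X` has cardinality `h!(n-h)`. -/
theorem stmt10 (n h : ℕ) (h1 : 1 ≤ h) (h2 : h + 1 ≤ n)
    (X : Set (Equiv.Perm (Fin n)))
    (hX : X = {p : Equiv.Perm (Fin n) | ∀ j : Fin n, h ≤ (j : ℕ) → ((p j : ℕ) = (j : ℕ) - h)}) :
    (∀ p ∈ X, ({q | (@starGraph n ⟨by omega⟩).Adj p q} \ X).ncard = n - h) ∧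
    (∀ q ∉ X, (∃ p ∈ X, (@starGraph n ⟨by omega⟩).Adj q p) →
      ({p ∈ X | (@starGraph n ⟨by omega⟩).Adj q p}).ncard = 1) ∧
    ({q | q ∉ X ∧ ∃ p ∈ X, (@starGraph n ⟨by omega⟩).Adj p q}).ncard = Nat.factorial h * (n - h) := by
  have : NeZero n := ⟨by omega⟩
  set S : Set (Fin n) := {j | h ≤ (j : ℕ)}
  obtain ⟨c, hc⟩ := Fin.exists_perm_val_apply_eq_sub h1 (by omega : h ≤ n)
  have hXc : X = {p : Perm (Fin n) | EqOn p c S} := by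
    subst hX
    ext p
    exact forall_congr' fun j => forall_congr' fun hj => by rw [Fin.ext_iff, hc j hj]
  have hS : (0 : Fin n) ∉ S := by simp [S]; omega
  have hSc : S.ncard = n - h := Fin.ncard_setOf_le_val h
  subst hXc
  refine ⟨fun p hp => hSc ▸ ncard_starGraph_neighbors_diff_eqOn hS hp, ?_, ?_⟩
  · rintro q hq ⟨p, hp, hqp⟩
    refine ncard_eq_one.mpr ⟨p, eq_singleton_iff_unique_mem.mpr ⟨⟨hp, hqp⟩, ?_⟩⟩
    exact fun r ⟨hr, hqr⟩ => eq_of_starGraph_adj_of_not_eqOn hS hq hr hp hqr hqp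
  · refine (ncard_starGraph_outerNeighbors_eqOn hS).trans ?_
    rw [hSc, Nat.sub_sub_self (by omega)]
end

section
/- Every edge set F of the 4-dimensional bubble-sort graph B_4 that disconnects B_4 so that every component of B_4 − F contains a subgraph isomorphic to B_3 has cardinality at least 6. -/
open SimpleGraph

/-! Let `S` be the component of `B₄ - F` containing a vertex `u` and suppose some `w` lies
outside it. Both `S` and its complement contain a copy of `B₃`, so each has at least 6 vertices,
and every edge of `B₄` leaving `S` lies in `F`; it remains to show that such an `S` has at least
6 boundary edges.

The vertices of `B₄` split into four layers `p 3 = a`, each inducing a 6-cycle, and the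
remaining edges `p ~ p * (2 3)` form a perfect matching with exactly two edges between any two
layers. A layer meeting both `S` and `Sᶜ` contributes at least two cycle edges to the boundary,
and a layer inside `S` together with a layer inside `Sᶜ` contributes two matching edges. With
`m` mixed layers, `f` layers inside `S` and `e` inside `Sᶜ`, this gives `2m + 2fe ≥ 6` when
`f, e ≥ 1`. If `f = 0` and `m ≤ 2`, at most `2m` vertices of `S` are matched into `S`, so the
other at least `6 - 2m` are matched out of it; `e = 0` is the same case for `Sᶜ`. -/

open Finset Function

open Fin.NatCast in
theorem Fin.exists_apply_and_not_apply_add_one {n : ℕ} [NeZero n] {P : Fin n → Prop}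
    {i j : Fin n} (hi : P i) (hj : ¬ P j) : ∃ k, P k ∧ ¬ P (k + 1) := by
  by_contra! h
  have hstep : ∀ m : ℕ, P (i + (m : Fin n)) := by
    intro m
    induction m with
    | zero => simpa using hi
    | succ m ih => simpa [Nat.cast_succ, ← add_assoc] using h _ ih
  exact hj (by simpa using hstep (j - i).val)

namespace SimpleGraph

variable {V : Type*} (G : SimpleGraph V) [DecidableRel G.Adj]

theorem card_interedges_comm (s t : Finset V) : #(G.interedges s t) = #(G.interedges t s) :=
  have := G.symm
  Rel.card_interedges_comm s t

variable [DecidableEq V]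

theorem two_le_card_interedges_of_cycle {n : ℕ} [NeZero n] (hn : 3 ≤ n) {c : Fin n → V}
    (hc : Injective c) (hadj : ∀ i, G.Adj (c i) (c (i + 1))) {S T : Finset V}
    (hT : ∀ i, c i ∈ T) (hin : ∃ i, c i ∈ S) (hout : ∃ i, c i ∉ S) :
    2 ≤ #(G.interedges (S ∩ T) (T \ S)) := by
  obtain ⟨i₀, hi₀⟩ := hin
  obtain ⟨j₀, hj₀⟩ := hout
  obtain ⟨i, hiS, hi'S⟩ := Fin.exists_apply_and_not_apply_add_one (P := (c · ∈ S)) hi₀ hj₀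
  obtain ⟨j, hjS, hj'S⟩ :=
    Fin.exists_apply_and_not_apply_add_one (P := (c · ∉ S)) hj₀ (not_not.2 hi₀)
  rw [not_not] at hj'S
  refine one_lt_card.2 ⟨(c i, c (i + 1)), ?_, (c (j + 1), c j), ?_, fun h ↦ ?_⟩
  · simp [mem_interedges_iff, hiS, hi'S, hT, hadj]
  · simp [mem_interedges_iff, hjS, hj'S, hT, (hadj j).symm]
  -- the exit edge at `i` and the entry edge at `j` coincide only on a cycle of length `2`
  obtain rfl : i = j + 1 := hc (Prod.ext_iff.1 h).1
  have h2 : (1 + 1 : Fin n) = 0 :=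
    add_eq_left.1 (by rw [← add_assoc]; exact hc (Prod.ext_iff.1 h).2)
  simp [Fin.ext_iff, Fin.val_add, Nat.mod_eq_of_lt (show 1 < n by omega),
    Nat.mod_eq_of_lt (show 2 < n by omega)] at h2

theorem card_interedges_compl_le_ncard [Fintype V] (F : Set (Sym2 V)) {S : Finset V}
    (hS : ∀ x y, x ∈ S → (G.deleteEdges F).Adj x y → y ∈ S) :
    #(G.interedges S Sᶜ) ≤ F.ncard := by
  have hinj : Set.InjOn (fun e : V × V ↦ s(e.1, e.2)) (G.interedges S Sᶜ) := by
    rintro ⟨x, y⟩ hxy ⟨x', y'⟩ hxy' h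
    simp only [mem_coe, mem_interedges_iff, mem_compl] at hxy hxy'
    rcases Sym2.eq_iff.1 h with ⟨rfl, rfl⟩ | ⟨rfl, rfl⟩
    · rfl
    · exact absurd hxy'.1 hxy.2.1
  have hsub : ((G.interedges S Sᶜ).image fun e ↦ s(e.1, e.2) : Set (Sym2 V)) ⊆ F := by
    simp only [coe_image, Set.image_subset_iff]
    rintro ⟨x, y⟩ hxy
    simp only [mem_coe, mem_interedges_iff, mem_compl] at hxy
    by_contra hF
    exact hxy.2.1 (hS x y hxy.1 ((deleteEdges_adj ..).2 ⟨hxy.2.2, hF⟩))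
  rw [← card_image_of_injOn hinj, ← Set.ncard_coe_finset]
  exact Set.ncard_le_ncard hsub (Set.toFinite F)

end SimpleGraph

instance (n : ℕ) : DecidableRel (bubbleGraph n).Adj := fun x y ↦
  decidable_of_iff (∃ (i : Fin n) (hi : (i : ℕ) + 1 < n), y = x * Equiv.swap i ⟨i + 1, hi⟩)
    Iff.rfl

namespace BubbleGraph4

open Equiv

def layer (a : Fin 4) : Finset (Perm (Fin 4)) := {p | p 3 = a}

-- Multiplying alternately by `(0 1)` and `(1 2)` on the right walks once around the
-- 6-cycle that `bubbleGraph 4` induces on a layer.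
def layerCycle (a : Fin 4) (i : Fin 6) : Perm (Fin 4) :=
  let s := swap (0 : Fin 4) 1
  let t := swap (1 : Fin 4) 2
  swap 3 a * ![1, s, s * t, s * t * s, s * t * s * t, s * t * s * t * s] i

def crossNeighbor (p : Perm (Fin 4)) : Perm (Fin 4) := p * swap 2 3

theorem layerCycle_mem_layer (a : Fin 4) (i : Fin 6) : layerCycle a i ∈ layer a := by
  revert a i; decide

theorem layerCycle_injective (a : Fin 4) : Injective (layerCycle a) := by
  revert a; decide

theorem exists_layerCycle_eq {a : Fin 4} {p : Perm (Fin 4)} (hp : p ∈ layer a) :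
    ∃ i, layerCycle a i = p := by
  have hsurj : ∀ p : Perm (Fin 4), ∃ i, layerCycle (p 3) i = p := by decide
  simp only [layer, mem_filter, mem_univ, true_and] at hp
  exact hp ▸ hsurj p

theorem adj_layerCycle (a : Fin 4) (i : Fin 6) :
    (bubbleGraph 4).Adj (layerCycle a i) (layerCycle a (i + 1)) := by
  revert a i; decide

theorem adj_crossNeighbor (p : Perm (Fin 4)) : (bubbleGraph 4).Adj p (crossNeighbor p) := by
  revert p; decide

theorem crossNeighbor_apply_three_ne (p : Perm (Fin 4)) : crossNeighbor p 3 ≠ p 3 := by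
  revert p; decide

theorem card_filter_crossNeighbor {c d : Fin 4} (h : c ≠ d) :
    #{p : Perm (Fin 4) | p 3 = c ∧ crossNeighbor p 3 = d} = 2 := by
  revert c d; decide

def fullLayers (S : Finset (Perm (Fin 4))) : Finset (Fin 4) := {a | layer a ⊆ S}

def mixedLayers (S : Finset (Perm (Fin 4))) : Finset (Fin 4) := (fullLayers S ∪ fullLayers Sᶜ)ᶜ

variable (S : Finset (Perm (Fin 4)))

theorem disjoint_fullLayers_compl : Disjoint (fullLayers S) (fullLayers Sᶜ) := by
  refine disjoint_left.2 fun a haS haSc ↦ ?_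
  simp only [fullLayers, mem_filter, mem_univ, true_and] at haS haSc
  exact mem_compl.1 (haSc (layerCycle_mem_layer a 0)) (haS (layerCycle_mem_layer a 0))

theorem card_mixedLayers_add :
    #(mixedLayers S) + #(fullLayers S) + #(fullLayers Sᶜ) = 4 := by
  rw [mixedLayers, card_compl, card_union_of_disjoint (disjoint_fullLayers_compl S)]
  have := card_le_univ (fullLayers S ∪ fullLayers Sᶜ)
  rw [card_union_of_disjoint (disjoint_fullLayers_compl S)] at this
  simp only [Fintype.card_fin] at this ⊢
  omega

theorem two_mul_card_mixedLayers_le :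
    2 * #(mixedLayers S) ≤
      #{e ∈ (bubbleGraph 4).interedges S Sᶜ | e.1 3 = e.2 3} := by
  set E : Fin 4 → Finset (Perm (Fin 4) × Perm (Fin 4)) :=
    fun a ↦ (bubbleGraph 4).interedges (S ∩ layer a) (layer a \ S)
  have hE : ∀ a, ∀ e ∈ E a, e.1 ∈ S ∧ e.2 ∉ S ∧ (bubbleGraph 4).Adj e.1 e.2 ∧
      e.1 3 = a ∧ e.2 3 = a := by
    intro a e he
    simp only [E, mem_interedges_iff, mem_inter, mem_sdiff, layer, mem_filter, mem_univ,
      true_and] at he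
    tauto
  calc 2 * #(mixedLayers S) = ∑ _a ∈ mixedLayers S, 2 := by simp [mul_comm]
    _ ≤ ∑ a ∈ mixedLayers S, #(E a) := by
      refine sum_le_sum fun a ha ↦ ?_
      simp only [mixedLayers, fullLayers, mem_compl, mem_union, mem_filter, mem_univ,
        true_and, not_or, not_subset] at ha
      obtain ⟨⟨p, hpa, hpS⟩, ⟨q, hqa, hqS⟩⟩ := ha
      refine two_le_card_interedges_of_cycle _ (by norm_num) (layerCycle_injective a)
        (adj_layerCycle a) (layerCycle_mem_layer a) ?_ ?_
      · obtain ⟨i, rfl⟩ := exists_layerCycle_eq hqa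
        exact ⟨i, by simpa using hqS⟩
      · obtain ⟨i, rfl⟩ := exists_layerCycle_eq hpa
        exact ⟨i, hpS⟩
    _ = #((mixedLayers S).biUnion E) := by
      refine (card_biUnion fun a _ b _ hab ↦ disjoint_left.2 fun e hea heb ↦ ?_).symm
      exact hab ((hE a e hea).2.2.2.1.symm.trans (hE b e heb).2.2.2.1)
    _ ≤ _ := by
      refine card_le_card fun e he ↦ ?_
      obtain ⟨a, -, hea⟩ := mem_biUnion.1 he
      obtain ⟨h₁, h₂, hadj, ha₁, ha₂⟩ := hE a e hea
      simp [mem_interedges_iff, h₁, h₂, hadj, ha₁, ha₂]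

theorem card_filter_crossNeighbor_notMem_le :
    #{p ∈ S | crossNeighbor p ∉ S} ≤
      #{e ∈ (bubbleGraph 4).interedges S Sᶜ | e.1 3 ≠ e.2 3} := by
  refine card_le_card_of_injOn (fun p ↦ (p, crossNeighbor p)) (fun p hp ↦ ?_)
    fun p _ q _ h ↦ (Prod.ext_iff.1 h).1
  simp only [mem_coe, mem_filter] at hp
  simp [mem_interedges_iff, hp.1, hp.2, adj_crossNeighbor, (crossNeighbor_apply_three_ne p).symm]

theorem two_mul_card_mixedLayers_add_le_card_interedges :
    2 * #(mixedLayers S) + #{p ∈ S | crossNeighbor p ∉ S} ≤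
      #((bubbleGraph 4).interedges S Sᶜ) := by
  rw [← card_filter_add_card_filter_not (fun e : Perm (Fin 4) × Perm (Fin 4) ↦ e.1 3 = e.2 3)]
  exact add_le_add (two_mul_card_mixedLayers_le S) (card_filter_crossNeighbor_notMem_le S)

theorem card_filter_mem_and_crossNeighbor_mem (A B : Finset (Fin 4)) :
    #{p : Perm (Fin 4) | p 3 ∈ A ∧ crossNeighbor p 3 ∈ B} = 2 * #{x ∈ A ×ˢ B | x.1 ≠ x.2} := by
  rw [card_eq_sum_card_fiberwise (f := fun p ↦ (p 3, crossNeighbor p 3))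
    (t := {x ∈ A ×ˢ B | x.1 ≠ x.2}), mul_comm, ← smul_eq_mul, ← sum_const]
  · refine sum_congr rfl fun ⟨c, d⟩ hx ↦ ?_
    simp only [mem_filter, mem_product] at hx
    rw [← card_filter_crossNeighbor hx.2, filter_filter]
    congr 1
    ext p
    simp only [mem_filter, mem_univ, true_and, Prod.ext_iff]
    constructor
    · exact fun h ↦ h.2
    · rintro ⟨rfl, rfl⟩
      exact ⟨hx.1, rfl, rfl⟩
  · intro p hp
    simp only [mem_coe, mem_filter, mem_univ, true_and] at hp
    simpa [hp] using (crossNeighbor_apply_three_ne p).symm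

theorem two_mul_card_fullLayers_mul_le :
    2 * (#(fullLayers S) * #(fullLayers Sᶜ)) ≤ #{p ∈ S | crossNeighbor p ∉ S} := by
  have hoff : {x ∈ fullLayers S ×ˢ fullLayers Sᶜ | x.1 ≠ x.2} = fullLayers S ×ˢ fullLayers Sᶜ :=
    filter_true_of_mem fun x hx heq ↦ disjoint_left.1 (disjoint_fullLayers_compl S)
      (mem_product.1 hx).1 (heq ▸ (mem_product.1 hx).2)
  rw [← card_product, ← hoff, ← card_filter_mem_and_crossNeighbor_mem]
  refine card_le_card fun p hp ↦ ?_
  simp only [fullLayers, mem_filter, mem_univ, true_and] at hp ⊢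
  have hmem : ∀ q : Perm (Fin 4), q ∈ layer (q 3) := by simp [layer]
  exact ⟨hp.1 (hmem p), mem_compl.1 (hp.2 (hmem _))⟩

theorem card_le_of_fullLayers_eq_empty (h : fullLayers S = ∅) (hm : #(mixedLayers S) ≤ 2) :
    #S ≤ 2 * #(mixedLayers S) + #{p ∈ S | crossNeighbor p ∉ S} := by
  have hmixed : ∀ p ∈ S, p 3 ∈ mixedLayers S := fun p hp ↦ by
    have : p ∈ layer (p 3) := by simp [layer]
    rw [mixedLayers, h, empty_union, mem_compl, fullLayers, mem_filter]
    exact fun hsub ↦ mem_compl.1 (hsub.2 this) hp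
  have hstay : #{p ∈ S | crossNeighbor p ∈ S} ≤ 2 * #(mixedLayers S) :=
    calc #{p ∈ S | crossNeighbor p ∈ S}
        ≤ #{p : Perm (Fin 4) | p 3 ∈ mixedLayers S ∧ crossNeighbor p 3 ∈ mixedLayers S} :=
          card_le_card fun p hp ↦ by
            obtain ⟨hpS, hqS⟩ := mem_filter.1 hp
            simp [hmixed p hpS, hmixed _ hqS]
      _ = 2 * #(mixedLayers S).offDiag := by
          rw [card_filter_mem_and_crossNeighbor_mem]
          congr 2
          ext
          simp [mem_offDiag, and_assoc]
      _ ≤ 2 * #(mixedLayers S) := by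
          rw [offDiag_card]
          interval_cases #(mixedLayers S) <;> norm_num
  have := card_filter_add_card_filter_not (s := S) (fun p ↦ crossNeighbor p ∈ S)
  omega

theorem six_le_card_interedges_of_fullLayers_eq_empty (hS : 6 ≤ #S) (h : fullLayers S = ∅) :
    6 ≤ #((bubbleGraph 4).interedges S Sᶜ) := by
  have := two_mul_card_mixedLayers_add_le_card_interedges S
  by_cases hm : #(mixedLayers S) ≤ 2
  · have := card_le_of_fullLayers_eq_empty S h hm
    omega
  · omega

theorem six_le_card_interedges (hS : 6 ≤ #S) (hSc : 6 ≤ #Sᶜ) :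
    6 ≤ #((bubbleGraph 4).interedges S Sᶜ) := by
  by_cases hf : fullLayers S = ∅
  · exact six_le_card_interedges_of_fullLayers_eq_empty S hS hf
  by_cases he : fullLayers Sᶜ = ∅
  · have h := six_le_card_interedges_of_fullLayers_eq_empty Sᶜ hSc he
    rwa [compl_compl, card_interedges_comm] at h
  have hf₁ := card_pos.2 (nonempty_iff_ne_empty.2 hf)
  have he₁ := card_pos.2 (nonempty_iff_ne_empty.2 he)
  have := card_mixedLayers_add S
  have := two_mul_card_mixedLayers_add_le_card_interedges S
  have := two_mul_card_fullLayers_mul_le S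
  nlinarith

end BubbleGraph4

theorem stmt15_general (F : Set (Sym2 (Equiv.Perm (Fin 4))))
    (hdisc : ¬ ((bubbleGraph 4).deleteEdges F).Connected)
    (hcomp : ∀ v : Equiv.Perm (Fin 4), ∃ A : Set (Equiv.Perm (Fin 4)),
      v ∈ A ∧ (∀ a ∈ A, ((bubbleGraph 4).deleteEdges F).Reachable v a) ∧
      Nonempty (bubbleGraph 3 ≃g ((bubbleGraph 4).deleteEdges F).induce A)) :
    6 ≤ F.ncard := by
  classical
  set G := (bubbleGraph 4).deleteEdges F
  obtain ⟨u, w, huw⟩ : ∃ u w, ¬ G.Reachable u w := by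
    by_contra! h
    exact hdisc ((connected_iff G).2 ⟨h, ⟨1⟩⟩)
  have hcomponent : ∀ v, 6 ≤ #{x | G.Reachable v x} := fun v ↦ by
    obtain ⟨A, -, hA, ⟨e⟩⟩ := hcomp v
    calc 6 = Nat.card (Equiv.Perm (Fin 3)) := by simp [Fintype.card_perm, Nat.factorial]
      _ = A.ncard := by rw [Nat.card_congr e.toEquiv, Nat.card_coe_set_eq]
      _ ≤ (({x | G.Reachable v x} : Finset _) : Set _).ncard :=
          Set.ncard_le_ncard fun x hx ↦ by simpa using hA x hx
      _ = _ := Set.ncard_coe_finset _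
  set S : Finset (Equiv.Perm (Fin 4)) := {x | G.Reachable u x}
  have hSc : 6 ≤ #Sᶜ := (hcomponent w).trans <| card_le_card fun x hx ↦ by
    simp only [S, mem_compl, mem_filter, mem_univ, true_and] at hx ⊢
    exact fun hux ↦ huw (hux.trans hx.symm)
  refine (BubbleGraph4.six_le_card_interedges S (hcomponent u) hSc).trans
    (card_interedges_compl_le_ncard _ F fun x y hx hxy ↦ ?_)
  simp only [S, mem_filter, mem_univ, true_and] at hx ⊢
  exact hx.trans hxy.reachable

/-- Every `B₃`-edge-cut of `B₄` (an edge set `F` such that `B₄ - F` is disconnected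
and every component of `B₄ - F` contains a subgraph isomorphic to `B₃`) has at least 6 edges. -/
theorem stmt15 (F : Set (Sym2 (Equiv.Perm (Fin 4))))
    (hF : F ⊆ (bubbleGraph 4).edgeSet)
    (hdisc : ¬ ((bubbleGraph 4).deleteEdges F).Connected)
    (hcomp : ∀ v : Equiv.Perm (Fin 4), ∃ A : Set (Equiv.Perm (Fin 4)),
      v ∈ A ∧ (∀ a ∈ A, ((bubbleGraph 4).deleteEdges F).Reachable v a) ∧
      Nonempty (bubbleGraph 3 ≃g ((bubbleGraph 4).deleteEdges F).induce A)) :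
    6 ≤ F.ncard :=
  stmt15_general F hdisc hcomp
end

section
/- For a fixed position t ∈ {1, n}, the bubble-sort graph B_n is partitioned into n induced subgraphs B_n^{t:j}, j ∈ {1,…,n}, each isomorphic to B_{n−1}, and between any two distinct such subgraphs B_n^{t:j_1} and B_n^{t:j_2} there are exactly (n−2)! pairwise vertex-disjoint (independent) edges. -/
open SimpleGraph

/-!
Left multiplication by a permutation is an automorphism of `B_n`, so every layer
`B_n^{t:j}` is isomorphic to `B_n^{t:t}`, the permutations fixing `t`; these are the
permutations of `{i // i ≠ t}`. When `t` is the first or last position, the order embedding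
`Fin (n - 1) → Fin n` onto `{i // i ≠ t}` is a shift, so it carries adjacent transpositions of
`Fin (n - 1)` exactly to the adjacent transpositions of `Fin n` avoiding `t`, which gives
`B_n^{t:t} ≅ B_{n-1}`. Only one adjacent transposition `τ` moves an extremal `t`, so the edges
from `B_n^{t:j₁}` to `B_n^{t:j₂}` are the pairs `(x, x τ)` with `x t = j₁` and `x (τ t) = j₂`;
they form a matching with `(n - 2)!` edges.
-/

open Equiv

section PermFixing

variable {α β : Type*} [DecidableEq β]

def permEquivFixing (t : β) (f : α ≃ {b : β // b ≠ t}) : Perm α ≃ {p : Perm β // p t = t} :=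
  f.permCongr.trans <| (Perm.subtypeEquivSubtypePerm (· ≠ t)).trans <|
    subtypeEquivRight fun _ => ⟨fun h => h t (not_not.2 rfl), fun h _ hb => not_not.1 hb ▸ h⟩

theorem permEquivFixing_mul (t : β) (f : α ≃ {b : β // b ≠ t}) (x y : Perm α) :
    (permEquivFixing t f (x * y) : Perm β) = permEquivFixing t f x * permEquivFixing t f y :=
  map_mul (Perm.ofSubtype.comp f.permCongrHom.toMonoidHom) x y

theorem permEquivFixing_swap [DecidableEq α] (t : β) (f : α ≃ {b : β // b ≠ t}) (a b : α) :
    (permEquivFixing t f (swap a b) : Perm β) = swap (f a : β) (f b) := by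
  change Perm.ofSubtype (f.permCongr (swap a b)) = _
  rw [permCongr_def, symm_trans_swap_trans, Perm.ofSubtype_swap_eq]

end PermFixing

theorem bubbleGraph_adj_mul_left_iff {n : ℕ} (g x y : Perm (Fin n)) :
    (bubbleGraph n).Adj (g * x) (g * y) ↔ (bubbleGraph n).Adj x y := by
  change (∃ i hi, _ = _) ↔ ∃ i hi, _ = _
  simp only [mul_assoc, mul_right_inj]

def bubbleGraphInduceIsoMulLeft {n : ℕ} (g : Perm (Fin n)) (t : Fin n) {j j' : Fin n}
    (hg : g j = j') :
    (bubbleGraph n).induce {p : Perm (Fin n) | p t = j} ≃g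
      (bubbleGraph n).induce {p : Perm (Fin n) | p t = j'} where
  toEquiv := (Equiv.mulLeft g).subtypeEquiv fun p => by
    simp [← hg, Perm.mul_apply]
  map_rel_iff' := bubbleGraph_adj_mul_left_iff g _ _

theorem nonempty_bubbleGraph_induce_fixed_iso {m n : ℕ} (t : Fin n)
    (f : Fin m ≃ {i : Fin n // i ≠ t}) (c : ℕ) (hf : ∀ k, (f k : ℕ) = k + c) :
    Nonempty ((bubbleGraph n).induce {p : Perm (Fin n) | p t = t} ≃g bubbleGraph m) := by
  set E := permEquivFixing t f
  have hmap : ∀ (x : Perm (Fin m)) (k : Fin m) (hk : (k : ℕ) + 1 < m), ∃ hi : (f k : ℕ) + 1 < n,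
      (E (x * swap k ⟨k + 1, hk⟩) : Perm (Fin n)) = E x * swap (f k : Fin n) ⟨f k + 1, hi⟩ := by
    intro x k hk
    have hfk : (f k : ℕ) + 1 = f ⟨k + 1, hk⟩ := by rw [hf, hf]; exact Nat.add_right_comm _ _ _
    refine ⟨hfk ▸ (f ⟨k + 1, hk⟩ : Fin n).isLt, ?_⟩
    rw [permEquivFixing_mul, permEquivFixing_swap]
    congr 2
    exact Fin.ext hfk.symm
  refine ⟨Iso.symm ⟨E, ?_⟩⟩
  intro x y
  change (bubbleGraph n).Adj (E x) (E y) ↔ (bubbleGraph m).Adj x y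
  constructor
  · rintro ⟨i, hi, hxy⟩
    have hfix : swap i ⟨i + 1, hi⟩ t = t := (E x).1.injective <| by
      rw [← Perm.mul_apply, ← hxy, (E y).2, (E x).2]
    have hne : i ≠ ⟨i + 1, hi⟩ := Fin.ne_of_val_ne (by simp)
    have hit : i ≠ t := fun h => hne (by simpa [h] using hfix.symm)
    have hi't : (⟨i + 1, hi⟩ : Fin n) ≠ t := fun h => hne (by simpa [← h] using hfix)
    obtain ⟨k, hk⟩ := f.surjective ⟨i, hit⟩
    obtain ⟨k', hk'⟩ := f.surjective ⟨⟨i + 1, hi⟩, hi't⟩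
    have hkk' : (k' : ℕ) = k + 1 := by
      have h := hf k; have h' := hf k'
      rw [hk] at h; rw [hk'] at h'
      simp only at h h'
      omega
    have hk1 : (k : ℕ) + 1 < m := hkk' ▸ k'.isLt
    refine ⟨k, hk1, E.injective (Subtype.ext ?_)⟩
    obtain ⟨_, hEx⟩ := hmap x k hk1
    rw [hxy, hEx]
    simp only [hk]
  · rintro ⟨k, hk, rfl⟩
    obtain ⟨hi, hEx⟩ := hmap x k hk
    exact ⟨f k, hi, hEx⟩

theorem nonempty_bubbleGraph_induce_iso_of_extremal {m : ℕ} (t j : Fin (m + 1))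
    (ht : (t : ℕ) = 0 ∨ (t : ℕ) = m) :
    Nonempty ((bubbleGraph (m + 1)).induce {p : Perm (Fin (m + 1)) | p t = j} ≃g
      bubbleGraph m) := by
  have hshift : ∃ c, ∀ k, (t.succAbove k : ℕ) = k + c := by
    rcases ht with h | h
    · obtain rfl : t = 0 := Fin.ext h
      exact ⟨1, fun k => rfl⟩
    · obtain rfl : t = Fin.last m := Fin.ext h
      exact ⟨0, fun k => by simp⟩
  obtain ⟨c, hc⟩ := hshift
  obtain ⟨e⟩ := nonempty_bubbleGraph_induce_fixed_iso t (finSuccAboveEquiv t) c hc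
  exact ⟨(bubbleGraphInduceIsoMulLeft (swap j t) t (swap_apply_left j t)).trans e⟩

theorem bubbleGraph_adj_apply_ne {n : ℕ} {x y : Perm (Fin n)} {t : Fin n}
    (hxy : (bubbleGraph n).Adj x y) (hne : x t ≠ y t) :
    ∃ (i : Fin n) (hi : (i : ℕ) + 1 < n), ((i : ℕ) = t ∨ (i : ℕ) + 1 = t) ∧
      y = x * swap i ⟨i + 1, hi⟩ := by
  obtain ⟨i, hi, rfl⟩ := hxy
  refine ⟨i, hi, ?_, rfl⟩
  by_contra h
  simp only [not_or] at h
  apply hne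
  rw [Perm.mul_apply, swap_apply_of_ne_of_ne (Fin.ne_of_val_ne (Ne.symm h.1))
    (Fin.ne_of_val_ne (Ne.symm h.2))]

theorem exists_unique_adjacent_pair_mem_of_extremal {n : ℕ} (hn : 2 ≤ n) (t : Fin n)
    (ht : (t : ℕ) = 0 ∨ (t : ℕ) = n - 1) :
    ∃ i : Fin n, (i : ℕ) + 1 < n ∧ ((i : ℕ) = t ∨ (i : ℕ) + 1 = t) ∧
      ∀ i' : Fin n, (i' : ℕ) + 1 < n → ((i' : ℕ) = t ∨ (i' : ℕ) + 1 = t) → i' = i := by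
  rcases ht with h | h
  · exact ⟨⟨0, by omega⟩, by simp; omega, by simp [h], fun i' _ h' => Fin.ext (by simp; omega)⟩
  · exact ⟨⟨n - 2, by omega⟩, by simp; omega, by simp; omega,
      fun i' _ h' => Fin.ext (by simp; omega)⟩

section CrossEdges

variable {α : Type*} [Fintype α] [DecidableEq α]

theorem card_perm_apply_eq_and_apply_eq {a b u v : α} (hab : a ≠ b) (huv : u ≠ v) :
    Nat.card {x : Perm α // x a = u ∧ x b = v} = (Fintype.card α - 2).factorial := by
  have hu : swap a u b ≠ u := fun h => hab <| (swap a u).injective (by rw [h, swap_apply_left])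
  set σ : Perm α := swap (swap a u b) v * swap a u
  have hσa : σ a = u := by
    rw [Perm.mul_apply, swap_apply_left, swap_apply_of_ne_of_ne (Ne.symm hu) huv]
  have hσb : σ b = v := by rw [Perm.mul_apply, swap_apply_left]
  have translate : {x : Perm α // x a = u ∧ x b = v} ≃ {y : Perm α // y a = a ∧ y b = b} :=
    (Equiv.mulLeft σ⁻¹).subtypeEquiv fun x => by
      simp [Perm.mul_apply, symm_apply_eq, hσa, hσb]
  have fixing : {y : Perm α // y a = a ∧ y b = b} ≃ Perm {c : α // c ∉ ({a, b} : Finset α)} :=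
    (subtypeEquivRight fun _ => by
      simp only [not_not, Finset.mem_insert, Finset.mem_singleton, forall_eq_or_imp,
        forall_eq]).trans (Perm.subtypeEquivSubtypePerm _).symm
  rw [Nat.card_congr (translate.trans fixing), Nat.card_eq_fintype_card, Fintype.card_perm,
    Fintype.card_subtype_compl, Fintype.card_coe, Finset.card_pair hab]

theorem card_cross_edges (G : SimpleGraph (Perm α)) {t : α} {τ : Perm α}
    (hτ : ∀ x, G.Adj x (x * τ)) (hτt : τ t ≠ t)
    (hcross : ∀ x y, G.Adj x y → x t ≠ y t → y = x * τ) {j₁ j₂ : α} (hj : j₁ ≠ j₂) :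
    Nat.card {e : Perm α × Perm α // e.1 t = j₁ ∧ e.2 t = j₂ ∧ G.Adj e.1 e.2} =
      (Fintype.card α - 2).factorial := by
  have hcross' : ∀ e : {e : Perm α × Perm α // e.1 t = j₁ ∧ e.2 t = j₂ ∧ G.Adj e.1 e.2},
      e.1.2 = e.1.1 * τ := fun e => hcross _ _ e.2.2.2 (by rw [e.2.1, e.2.2.1]; exact hj)
  have edgeEquiv : {e : Perm α × Perm α // e.1 t = j₁ ∧ e.2 t = j₂ ∧ G.Adj e.1 e.2} ≃
      {x : Perm α // x t = j₁ ∧ x (τ t) = j₂} :=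
    { toFun e := ⟨e.1.1, e.2.1, by rw [← Perm.mul_apply, ← hcross' e, e.2.2.1]⟩
      invFun x := ⟨(x.1, x.1 * τ), x.2.1, x.2.2, hτ x.1⟩
      left_inv e := Subtype.ext (Prod.ext rfl (hcross' e).symm) }
  rw [Nat.card_congr edgeEquiv, card_perm_apply_eq_and_apply_eq (Ne.symm hτt) hj]

end CrossEdges

theorem cross_edges_injective {α : Type*} (G : SimpleGraph (Perm α)) {t : α} {τ : Perm α}
    (hcross : ∀ x y, G.Adj x y → x t ≠ y t → y = x * τ) {j₁ j₂ : α} (hj : j₁ ≠ j₂)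
    (x x' y y' : Perm α) (hx : x t = j₁) (hx' : x' t = j₁) (hy : y t = j₂) (hy' : y' t = j₂)
    (hxy : G.Adj x y) (hxy' : G.Adj x' y') : x = x' ↔ y = y' := by
  rw [hcross x y hxy (by rw [hx, hy]; exact hj), hcross x' y' hxy' (by rw [hx', hy']; exact hj),
    mul_left_inj]

theorem stmt17_general (n : ℕ) (t : Fin n) (ht : (t : ℕ) = 0 ∨ (t : ℕ) = n - 1) :
    (∀ j : Fin n,
      Nonempty ((bubbleGraph n).induce {p : Equiv.Perm (Fin n) | p t = j} ≃g
        bubbleGraph (n - 1))) ∧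
    (∀ j₁ j₂ : Fin n, j₁ ≠ j₂ →
      Nat.card {e : Equiv.Perm (Fin n) × Equiv.Perm (Fin n) //
          e.1 t = j₁ ∧ e.2 t = j₂ ∧ (bubbleGraph n).Adj e.1 e.2} = Nat.factorial (n - 2) ∧
      (∀ x x' y y' : Equiv.Perm (Fin n), x t = j₁ → x' t = j₁ → y t = j₂ → y' t = j₂ →
        (bubbleGraph n).Adj x y → (bubbleGraph n).Adj x' y' → (x = x' ↔ y = y'))) := by
  obtain ⟨m, rfl⟩ : ∃ m, n = m + 1 := ⟨n - 1, by have := t.isLt; omega⟩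
  refine ⟨fun j => nonempty_bubbleGraph_induce_iso_of_extremal t j ht, fun j₁ j₂ hj => ?_⟩
  have hn : 2 ≤ m + 1 := by have := Fin.val_ne_of_ne hj; omega
  obtain ⟨i, hi, hti, hunique⟩ := exists_unique_adjacent_pair_mem_of_extremal hn t ht
  set τ : Perm (Fin (m + 1)) := swap i ⟨i + 1, hi⟩
  have hτt : τ t ≠ t := swap_apply_ne_self_iff.2
    ⟨Fin.ne_of_val_ne (by simp), by simpa [Fin.ext_iff, eq_comm] using hti⟩
  have hcross : ∀ x y, (bubbleGraph (m + 1)).Adj x y → x t ≠ y t → y = x * τ := by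
    intro x y hxy hne
    obtain ⟨i', hi', hti', rfl⟩ := bubbleGraph_adj_apply_ne hxy hne
    obtain rfl := hunique i' hi' hti'
    rfl
  refine ⟨?_, cross_edges_injective (bubbleGraph (m + 1)) hcross hj⟩
  rw [card_cross_edges (bubbleGraph (m + 1)) (fun _ => ⟨i, hi, rfl⟩) hτt hcross hj,
    Fintype.card_fin]

/-- For a fixed position `t` being the first or last coordinate, `B_n` is
partitioned into the `n` induced subgraphs `B_n^{t:j}`, each isomorphic to `B_{n-1}`, and
between any two distinct such subgraphs there are exactly `(n-2)!` pairwise vertex-disjoint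
(independent) edges. -/
theorem stmt17 (n : ℕ) (hn : 2 ≤ n) (t : Fin n) (ht : (t : ℕ) = 0 ∨ (t : ℕ) = n - 1) :
    (∀ j : Fin n,
      Nonempty ((bubbleGraph n).induce {p : Equiv.Perm (Fin n) | p t = j} ≃g
        bubbleGraph (n - 1))) ∧
    (∀ j₁ j₂ : Fin n, j₁ ≠ j₂ →
      Nat.card {e : Equiv.Perm (Fin n) × Equiv.Perm (Fin n) //
          e.1 t = j₁ ∧ e.2 t = j₂ ∧ (bubbleGraph n).Adj e.1 e.2} = Nat.factorial (n - 2) ∧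
      (∀ x x' y y' : Equiv.Perm (Fin n), x t = j₁ → x' t = j₁ → y t = j₂ → y' t = j₂ →
        (bubbleGraph n).Adj x y → (bubbleGraph n).Adj x' y' → (x = x' ↔ y = y'))) :=
  stmt17_general n t ht
end
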